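/- Let Ŷ_γ(x) = E[Y_S] + (β_F + γ)ᵀ(x − μ̄) for γ ∈ ℝ^d. If E[(Ŷ_γ(X_S) − Y_S)²] < E[(Ŷ_0(X_S) − Y_S)²], then (i) cov[γᵀX_S, δᵀΛᵀX_S] > 0 and (ii) cov[γᵀMᵀU(S), δᵀU(S)] > 0. -/

import Mathlib

/-!
Let `R = α_F + δᵀU + β_Fᵀ X − Y` be the residual of the projection. Its normal equations make
`R` uncorrelated with every `γᵀX`, and `Ŷ_0(X) − Y = R − δᵀU + const`, while
`Ŷ_γ − Ŷ_0 = γᵀ(X − μ̄)` is centred. Hence the change in mean squared error is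
`var[γᵀX] − 2 cov[γᵀX, δᵀU]`, and a strict improvement forces `γᵀ cov[X, U] δ > 0`.
Both claimed covariances equal this number as soon as `var[X_S]` and `var[U(S)]` are invertible:
`var[xᵀX_S] ≥ ∑ p_s xᵀΣ_s x > 0` by the law of total variance, and `xᵀU(S)` is a function of
`S` that takes the values `x_k + c` on bank `k` and `c` on the omitted bank, so it is not
constant unless `x = 0`.
-/

open MeasureTheory ProbabilityTheory Matrix Finset

section

variable {Ω ι κ : Type*} [MeasurableSpace Ω] {μ : Measure Ω}

section SquareIntegrable

lemma covariance_eq_integral_mul_sub [IsProbabilityMeasure μ] {f g : Ω → ℝ}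
    (hf : MemLp f 2 μ) (hg : MemLp g 2 μ) :
    cov[f, g; μ] = ∫ ω, f ω * g ω ∂μ - (∫ ω, f ω ∂μ) * ∫ ω, g ω ∂μ :=
  covariance_eq_sub hf hg

lemma memLp_two_of_forall_integrable_sq [IsFiniteMeasure μ] {f : Ω → ℝ}
    (hf : ∀ a : ℝ, Integrable (fun ω => (a + f ω) ^ 2) μ) : MemLp f 2 μ := by
  have hint : Integrable f μ := by
    have hf' : f = fun ω => ((1 + f ω) ^ 2 - (0 + f ω) ^ 2 - 1) / 2 := by funext ω; ring
    rw [hf']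
    exact (((hf 1).sub (hf 0)).sub (integrable_const 1)).div_const 2
  exact (memLp_two_iff_integrable_sq hint.aestronglyMeasurable).2 (by simpa using hf 0)

lemma memLp_two_of_forall_integrable_residual_sq [IsFiniteMeasure μ] [Fintype ι] [Fintype κ]
    {V : Ω → ι → ℝ} {W : Ω → κ → ℝ} {Y : Ω → ℝ}
    (h : ∀ (a : ℝ) (l : κ → ℝ) (b : ι → ℝ),
      Integrable (fun ω => (a + (∑ k, l k * W ω k) + b ⬝ᵥ V ω - Y ω) ^ 2) μ) :
    (∀ i, MemLp (fun ω => V ω i) 2 μ) ∧ (∀ k, MemLp (fun ω => W ω k) 2 μ) ∧ MemLp Y 2 μ := by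
  classical
  have hres : ∀ (l : κ → ℝ) (b : ι → ℝ),
      MemLp (fun ω => (∑ k, l k * W ω k) + b ⬝ᵥ V ω - Y ω) 2 μ := fun l b =>
    memLp_two_of_forall_integrable_sq fun a => by
      simpa only [add_assoc, add_sub_assoc] using h a l b
  refine ⟨fun i => ?_, fun k => ?_, ?_⟩
  · convert (hres 0 (Pi.single i 1)).sub (hres 0 0) using 1; ext ω; simp
  · convert (hres (Pi.single k 1) 0).sub (hres 0 0) using 1; ext ω; simp [Pi.single_apply]
  · convert (hres 0 0).neg using 1; ext ω; simp

lemma integral_add_sq {f g : Ω → ℝ} (hf : MemLp f 2 μ) (hg : MemLp g 2 μ) :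
    ∫ ω, (f ω + g ω) ^ 2 ∂μ
      = ∫ ω, f ω ^ 2 ∂μ + 2 * ∫ ω, f ω * g ω ∂μ + ∫ ω, g ω ^ 2 ∂μ := by
  have hfg : Integrable (fun ω => 2 * (f ω * g ω)) μ := (hf.integrable_mul hg).const_mul 2
  calc ∫ ω, (f ω + g ω) ^ 2 ∂μ = ∫ ω, (f ω ^ 2 + 2 * (f ω * g ω) + g ω ^ 2) ∂μ := by
        congr with ω; ring
    _ = _ := by
        rw [integral_add (hf.integrable_sq.fun_add hfg) hg.integrable_sq,
          integral_add hf.integrable_sq hfg, integral_const_mul]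

lemma integral_mul_eq_zero_of_forall_integral_sq_le {r g : Ω → ℝ} (hr : MemLp r 2 μ)
    (hg : MemLp g 2 μ) (h : ∀ t : ℝ, ∫ ω, r ω ^ 2 ∂μ ≤ ∫ ω, (r ω + t * g ω) ^ 2 ∂μ) :
    ∫ ω, r ω * g ω ∂μ = 0 := by
  have hquad : ∀ t : ℝ,
      0 ≤ (∫ ω, g ω ^ 2 ∂μ) * (t * t) + 2 * (∫ ω, r ω * g ω ∂μ) * t + 0 := by
    intro t
    have ht := h t
    simp_rw [integral_add_sq hr (hg.const_mul t), mul_pow, mul_left_comm (r _) t,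
      integral_const_mul] at ht
    linarith
  have hdisc := discrim_le_zero hquad
  rw [discrim] at hdisc
  nlinarith

lemma covariance_eq_zero_of_forall_integral_sq_le [IsProbabilityMeasure μ] {r g : Ω → ℝ}
    (hr : MemLp r 2 μ) (hg : MemLp g 2 μ)
    (h : ∀ a t : ℝ, ∫ ω, r ω ^ 2 ∂μ ≤ ∫ ω, (r ω + (a + t * g ω)) ^ 2 ∂μ) :
    cov[r, g; μ] = 0 := by
  have hr1 : ∫ ω, r ω * 1 ∂μ = 0 :=
    integral_mul_eq_zero_of_forall_integral_sq_le hr (memLp_const 1) fun a => by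
      simpa using h a 0
  have hrg : ∫ ω, r ω * g ω ∂μ = 0 :=
    integral_mul_eq_zero_of_forall_integral_sq_le hr hg fun t => by simpa using h 0 t
  simp only [mul_one] at hr1
  rw [covariance_eq_integral_mul_sub hr hg, hrg, hr1, zero_mul, sub_zero]

lemma covariance_neg_of_integral_add_sq_lt [IsProbabilityMeasure μ] {f g : Ω → ℝ}
    (hf : MemLp f 2 μ) (hg : MemLp g 2 μ) (hg0 : ∫ ω, g ω ∂μ = 0)
    (h : ∫ ω, (f ω + g ω) ^ 2 ∂μ < ∫ ω, f ω ^ 2 ∂μ) : cov[f, g; μ] < 0 := by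
  rw [integral_add_sq hf hg] at h
  have hg2 : 0 ≤ ∫ ω, g ω ^ 2 ∂μ := integral_nonneg fun ω => sq_nonneg _
  rw [covariance_eq_integral_mul_sub hf hg, hg0, mul_zero, sub_zero]
  linarith

lemma integral_sub_sq_le_of_integral_eq [IsFiniteMeasure μ] {Z : Ω → ℝ} (hZ : MemLp Z 2 μ)
    {m : ℝ} (hm : ∫ ω, Z ω ∂μ = μ.real Set.univ * m) (c : ℝ) :
    ∫ ω, (Z ω - m) ^ 2 ∂μ ≤ ∫ ω, (Z ω - c) ^ 2 ∂μ := by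
  have hcross : ∫ ω, (Z ω - m) * (m - c) ∂μ = 0 := by
    rw [integral_mul_const, integral_sub (hZ.integrable one_le_two) (integrable_const m), hm,
      integral_const, smul_eq_mul, sub_self, zero_mul]
  have h := integral_add_sq (hZ.sub (memLp_const m)) (memLp_const (m - c))
  simp only [Pi.sub_apply, sub_add_sub_cancel] at h
  rw [h, hcross]
  have hc : 0 ≤ ∫ _ : Ω, (m - c) ^ 2 ∂μ := integral_nonneg fun _ => sq_nonneg _
  linarith

end SquareIntegrable

section DotProduct

lemma memLp_dotProduct [Fintype ι] {p : ENNReal} {V : Ω → ι → ℝ}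
    (hV : ∀ i, MemLp (fun ω => V ω i) p μ) (a : ι → ℝ) : MemLp (fun ω => a ⬝ᵥ V ω) p μ :=
  memLp_finsetSum _ fun i _ => (hV i).const_mul (a i)

lemma integral_dotProduct [Fintype ι] {V : Ω → ι → ℝ}
    (hV : ∀ i, Integrable (fun ω => V ω i) μ) (a : ι → ℝ) :
    ∫ ω, a ⬝ᵥ V ω ∂μ = a ⬝ᵥ fun i => ∫ ω, V ω i ∂μ := by
  simp only [dotProduct]
  rw [integral_finsetSum _ fun i _ => (hV i).const_mul (a i)]
  simp only [integral_const_mul]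

lemma integral_dotProduct_mul_dotProduct [Fintype ι] [Fintype κ] {V : Ω → ι → ℝ}
    {W : Ω → κ → ℝ} (h : ∀ i j, Integrable (fun ω => V ω i * W ω j) μ) (a : ι → ℝ)
    (b : κ → ℝ) :
    ∫ ω, (a ⬝ᵥ V ω) * (b ⬝ᵥ W ω) ∂μ
      = a ⬝ᵥ (Matrix.of (fun i j => ∫ ω, V ω i * W ω j ∂μ) *ᵥ b) := by
  have hexp : ∀ ω, (a ⬝ᵥ V ω) * (b ⬝ᵥ W ω) = ∑ i, a i * ∑ j, (V ω i * W ω j) * b j := by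
    intro ω
    rw [dotProduct, dotProduct, Finset.sum_mul_sum]
    refine Finset.sum_congr rfl fun i _ => ?_
    rw [Finset.mul_sum]
    exact Finset.sum_congr rfl fun j _ => by ring
  simp_rw [hexp]
  rw [integral_finsetSum _ fun i _ =>
    (integrable_finsetSum _ fun j _ => (h i j).mul_const (b j)).const_mul (a i)]
  refine Finset.sum_congr rfl fun i _ => ?_
  rw [integral_const_mul, integral_finsetSum _ fun j _ => (h i j).mul_const (b j)]
  simp only [integral_mul_const, mulVec, dotProduct, Matrix.of_apply]

noncomputable def crossCovariance (V : Ω → ι → ℝ) (W : Ω → κ → ℝ) (μ : Measure Ω) :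
    Matrix ι κ ℝ :=
  Matrix.of fun i j => cov[fun ω => V ω i, fun ω => W ω j; μ]

lemma eq_crossCovariance [IsProbabilityMeasure μ] {V : Ω → ι → ℝ} {W : Ω → κ → ℝ}
    (hV : ∀ i, MemLp (fun ω => V ω i) 2 μ) (hW : ∀ j, MemLp (fun ω => W ω j) 2 μ)
    {C : Matrix ι κ ℝ}
    (hC : ∀ i j, C i j = ∫ ω, V ω i * W ω j ∂μ - (∫ ω, V ω i ∂μ) * ∫ ω, W ω j ∂μ) :
    C = crossCovariance V W μ := by
  ext i j
  rw [hC, crossCovariance, Matrix.of_apply, covariance_eq_integral_mul_sub (hV i) (hW j)]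

lemma covariance_dotProduct [Fintype ι] [Fintype κ] [IsFiniteMeasure μ] {V : Ω → ι → ℝ}
    {W : Ω → κ → ℝ} (hV : ∀ i, MemLp (fun ω => V ω i) 2 μ)
    (hW : ∀ j, MemLp (fun ω => W ω j) 2 μ) (a : ι → ℝ) (b : κ → ℝ) :
    cov[fun ω => a ⬝ᵥ V ω, fun ω => b ⬝ᵥ W ω; μ] = a ⬝ᵥ (crossCovariance V W μ *ᵥ b) := by
  simp only [dotProduct]
  rw [covariance_fun_sum_fun_sum (fun i => (hV i).const_mul (a i))
    (fun j => (hW j).const_mul (b j))]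
  simp only [covariance_const_mul_left, covariance_const_mul_right, mulVec, dotProduct,
    crossCovariance, Matrix.of_apply, Finset.mul_sum]
  exact Finset.sum_congr rfl fun i _ => Finset.sum_congr rfl fun j _ => by ring

lemma isUnit_det_crossCovariance_self [Fintype ι] [DecidableEq ι] [IsFiniteMeasure μ]
    {V : Ω → ι → ℝ} (hV : ∀ i, MemLp (fun ω => V ω i) 2 μ)
    (hpos : ∀ x, x ≠ 0 → 0 < Var[fun ω => x ⬝ᵥ V ω; μ]) :
    IsUnit (crossCovariance V V μ).det := by
  refine (isUnit_iff_isUnit_det _).1 <| mulVec_injective_iff_isUnit.1 fun x y hxy => ?_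
  by_contra hne
  have h := hpos (x - y) (sub_ne_zero.2 hne)
  rw [← covariance_self (memLp_dotProduct hV _).aemeasurable, covariance_dotProduct hV hV,
    mulVec_sub, hxy, sub_self, dotProduct_zero] at h
  exact lt_irrefl 0 h

end DotProduct

theorem covariance_pos_of_integral_sq_lt [Fintype ι] [IsProbabilityMeasure μ] {X : Ω → ι → ℝ}
    {Y Z : Ω → ℝ} (hX : ∀ i, MemLp (fun ω => X ω i) 2 μ) (hY : MemLp Y 2 μ) (hZ : MemLp Z 2 μ)
    {m : ι → ℝ} (hm : ∀ i, ∫ ω, X ω i ∂μ = m i) {α c : ℝ} {β γ : ι → ℝ}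
    (hproj : ∀ (a : ℝ) (b : ι → ℝ), ∫ ω, (α + Z ω + β ⬝ᵥ X ω - Y ω) ^ 2 ∂μ
      ≤ ∫ ω, (a + Z ω + b ⬝ᵥ X ω - Y ω) ^ 2 ∂μ)
    (hlt : ∫ ω, (c + (β + γ) ⬝ᵥ (X ω - m) - Y ω) ^ 2 ∂μ
      < ∫ ω, (c + β ⬝ᵥ (X ω - m) - Y ω) ^ 2 ∂μ) :
    0 < cov[Z, fun ω => γ ⬝ᵥ X ω; μ] := by
  set G := fun ω => γ ⬝ᵥ X ω
  set R := fun ω => α + Z ω + β ⬝ᵥ X ω - Y ω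
  have hG : MemLp G 2 μ := memLp_dotProduct hX γ
  have hR : MemLp R 2 μ := (((memLp_const α).add hZ).add (memLp_dotProduct hX β)).sub hY
  -- the normal equations of the projection in the directions `1` and `γᵀX`
  have hRG : cov[R, G; μ] = 0 := covariance_eq_zero_of_forall_integral_sq_le hR hG fun a t => by
    convert hproj (α + a) (β + t • γ) using 3 with ω
    simp only [R, G, add_dotProduct, smul_dotProduct, smul_eq_mul]
    ring
  have hA : (fun ω => c + β ⬝ᵥ (X ω - m) - Y ω) = fun ω => R ω - Z ω + (c - α - β ⬝ᵥ m) := by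
    funext ω
    simp only [R, dotProduct_sub]
    ring
  have hB : (fun ω => γ ⬝ᵥ (X ω - m)) = fun ω => G ω - γ ⬝ᵥ m := by
    funext ω
    simp only [G, dotProduct_sub]
  have hneg : cov[fun ω => c + β ⬝ᵥ (X ω - m) - Y ω, fun ω => γ ⬝ᵥ (X ω - m); μ] < 0 := by
    refine covariance_neg_of_integral_add_sq_lt ?_ ?_ ?_ ?_
    · rw [hA]; exact (hR.sub hZ).add (memLp_const _)
    · rw [hB]; exact hG.sub (memLp_const _)
    · rw [hB, integral_sub (hG.integrable one_le_two) (integrable_const _),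
        integral_dotProduct (fun i => (hX i).integrable one_le_two), funext hm]
      simp
    · simpa only [add_dotProduct, add_sub_right_comm, add_assoc] using hlt
  rw [hA, hB, covariance_sub_const_right (hG.integrable one_le_two),
    covariance_add_const_left (X := fun ω => R ω - Z ω) ((hR.sub hZ).integrable one_le_two),
    covariance_fun_sub_left hR hZ hG, hRG] at hneg
  linarith

section Mixture

variable {σ : Type*} [Fintype σ] [MeasurableSpace σ] [MeasurableSingletonClass σ]
  {S : Ω → σ}

lemma integral_eq_sum_setIntegral_fiber (hS : Measurable S) {f : Ω → ℝ}
    (hf : Integrable f μ) : ∫ ω, f ω ∂μ = ∑ s, ∫ ω in {ω | S ω = s}, f ω ∂μ := by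
  have hcover : (⋃ s, S ⁻¹' {s}) = Set.univ := by
    rw [← Set.preimage_iUnion, Set.iUnion_of_singleton, Set.preimage_univ]
  calc ∫ ω, f ω ∂μ = ∫ ω in ⋃ s, S ⁻¹' {s}, f ω ∂μ := by rw [hcover, setIntegral_univ]
    _ = _ := integral_iUnion_fintype (fun s => hS (measurableSet_singleton s))
      (pairwise_disjoint_fiber S) fun s => hf.integrableOn

lemma integral_comp_eq_sum [IsFiniteMeasure μ] (hS : Measurable S) (g : σ → ℝ) :
    ∫ ω, g (S ω) ∂μ = ∑ s, μ.real {ω | S ω = s} * g s := by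
  rw [← integral_map hS.aemeasurable (measurable_of_finite g).aestronglyMeasurable,
    integral_fintype Integrable.of_finite]
  simp only [map_measureReal_apply hS (measurableSet_singleton _), smul_eq_mul]
  rfl

theorem variance_dotProduct_pos_of_mixture [Fintype ι] [Nonempty σ] [IsProbabilityMeasure μ]
    (hS : Measurable S) {X : Ω → ι → ℝ} (hX : ∀ i, MemLp (fun ω => X ω i) 2 μ) {p : σ → ℝ}
    (hp : ∀ s, 0 < p s) (hmeas : ∀ s, μ.real {ω | S ω = s} = p s) {m : σ → ι → ℝ}
    (hmean : ∀ s i, ∫ ω in {ω | S ω = s}, X ω i ∂μ = p s * m s i)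
    {Sig : σ → Matrix ι ι ℝ}
    (hcov : ∀ s i j,
      ∫ ω in {ω | S ω = s}, (X ω i - m s i) * (X ω j - m s j) ∂μ = p s * Sig s i j)
    (hSig : ∀ s, (Sig s).PosDef) {x : ι → ℝ} (hx : x ≠ 0) :
    0 < Var[fun ω => x ⬝ᵥ X ω; μ] := by
  have hZ := memLp_dotProduct hX x
  set c := ∫ ω, x ⬝ᵥ X ω ∂μ
  have hZc : Integrable (fun ω => (x ⬝ᵥ X ω - c) ^ 2) μ :=
    (hZ.sub (memLp_const c)).integrable_sq
  rw [variance_eq_integral hZ.aemeasurable, integral_eq_sum_setIntegral_fiber hS hZc]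
  refine Finset.sum_pos (fun s _ => ?_) Finset.univ_nonempty
  have hmean_s : ∫ ω in {ω | S ω = s}, x ⬝ᵥ X ω ∂μ
      = (μ.restrict {ω | S ω = s}).real Set.univ * (x ⬝ᵥ m s) := by
    rw [integral_dotProduct (fun i => ((hX i).integrable one_le_two).restrict),
      measureReal_restrict_apply_univ, hmeas]
    simp only [hmean, dotProduct, Finset.mul_sum]
    exact Finset.sum_congr rfl fun i _ => by ring
  have hXs : ∀ i, MemLp (fun ω => (X ω - m s) i) 2 (μ.restrict {ω | S ω = s}) :=
    fun i => ((hX i).sub (memLp_const _)).restrict _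
  have hSig_eq : Matrix.of (fun i j => ∫ ω in {ω | S ω = s}, (X ω - m s) i * (X ω - m s) j ∂μ)
      = p s • Sig s := by
    ext i j
    simp only [Matrix.of_apply, Pi.sub_apply, hcov, Matrix.smul_apply, smul_eq_mul]
  calc 0 < p s * (x ⬝ᵥ (Sig s *ᵥ x)) :=
        mul_pos (hp s) (by simpa using (hSig s).dotProduct_mulVec_pos hx)
    _ = ∫ ω in {ω | S ω = s}, (x ⬝ᵥ (X ω - m s)) * (x ⬝ᵥ (X ω - m s)) ∂μ := by
        rw [integral_dotProduct_mul_dotProduct (fun i j => (hXs i).integrable_mul (hXs j)),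
          hSig_eq, smul_mulVec, dotProduct_smul, smul_eq_mul]
    _ = ∫ ω in {ω | S ω = s}, (x ⬝ᵥ X ω - x ⬝ᵥ m s) ^ 2 ∂μ := by simp_rw [dotProduct_sub, sq]
    _ ≤ _ := integral_sub_sq_le_of_integral_eq (hZ.restrict _) hmean_s c

theorem variance_dotProduct_indicator_pos [Fintype κ] [DecidableEq σ] [IsProbabilityMeasure μ]
    (hS : Measurable S) {p : σ → ℝ} (hp : ∀ s, 0 < p s)
    (hmeas : ∀ s, μ.real {ω | S ω = s} = p s) {e : κ → σ} (he : Function.Injective e)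
    {s₀ : σ} (hs₀ : ∀ k, e k ≠ s₀) (q : κ → ℝ) {x : κ → ℝ} (hx : x ≠ 0) :
    0 < Var[fun ω => x ⬝ᵥ fun k => (if S ω = e k then 1 else 0) - q k; μ] := by
  set g : σ → ℝ := fun s => x ⬝ᵥ fun k => (if s = e k then 1 else 0) - q k
  have hg : ∀ k, g (e k) - g s₀ = x k := by
    intro k
    simp only [g, dotProduct, ← Finset.sum_sub_distrib, fun k => (hs₀ k).symm, if_false]
    classical
    simp [mul_sub, he.eq_iff]
  obtain ⟨k, hk⟩ : ∃ k, x k ≠ 0 := Function.ne_iff.1 hx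
  change 0 < Var[fun ω => g (S ω); μ]
  rw [variance_eq_integral (X := fun ω => g (S ω))
    ((measurable_of_finite g).comp hS).aemeasurable]
  set c := ∫ ω, g (S ω) ∂μ
  rw [integral_comp_eq_sum hS fun s => (g s - c) ^ 2]
  simp only [hmeas]
  obtain ⟨s, hs⟩ : ∃ s, g s ≠ c := by
    by_contra! hall
    exact hk (by rw [← hg k, hall, hall, sub_self])
  exact Finset.sum_pos' (fun s _ => mul_nonneg (hp s).le (sq_nonneg _))
    ⟨s, Finset.mem_univ _, mul_pos (hp s) (sq_pos_of_ne_zero (sub_ne_zero.2 hs))⟩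

end Mixture

end

theorem stmt14_general
    {Ω : Type*} [MeasurableSpace Ω] (P : Measure Ω) [IsProbabilityMeasure P]
    (n d : ℕ) (S : Ω → Fin (n + 1)) (hS : Measurable S)
    (X : Ω → Fin d → ℝ) (Y : Ω → ℝ)
    (p : Fin (n + 1) → ℝ) (μv : Fin (n + 1) → Fin d → ℝ)
    (Sig : Fin (n + 1) → Matrix (Fin d) (Fin d) ℝ)
    (hp : ∀ s, 0 < p s)
    (hmeas : ∀ s, P {ω | S ω = s} = ENNReal.ofReal (p s))
    (hmean : ∀ s i, ∫ ω in {ω | S ω = s}, X ω i ∂P = p s * μv s i)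
    (hcovX : ∀ s i j,
      ∫ ω in {ω | S ω = s}, (X ω i - μv s i) * (X ω j - μv s j) ∂P = p s * Sig s i j)
    (hSigPD : ∀ s, (Sig s).PosDef)
    (μbar : Fin d → ℝ) (hμbar : μbar = ∑ s, p s • μv s)
    -- centered bank dummies
    (U : Fin n → Ω → ℝ)
    (hU : ∀ i ω, U i ω = (if S ω = i.castSucc then 1 else 0) - p i.castSucc)
    (hint : ∀ (a : ℝ) (l : Fin n → ℝ) (b : Fin d → ℝ),
      Integrable (fun ω => (a + (∑ k, l k * U k ω) + b ⬝ᵥ X ω - Y ω) ^ 2) P)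
    -- Λ = var[X_S]⁻¹ cov[X_S, U(S)] and M = var[U(S)]⁻¹ cov[U(S), X_S]
    (VarX : Matrix (Fin d) (Fin d) ℝ)
    (hVarX : ∀ i j, VarX i j =
      (∫ ω, X ω i * X ω j ∂P) - (∫ ω, X ω i ∂P) * (∫ ω, X ω j ∂P))
    (covXU : Matrix (Fin d) (Fin n) ℝ)
    (hcovXU : ∀ i k, covXU i k =
      (∫ ω, X ω i * U k ω ∂P) - (∫ ω, X ω i ∂P) * (∫ ω, U k ω ∂P))
    (Λ : Matrix (Fin d) (Fin n) ℝ) (hΛ : Λ = VarX⁻¹ * covXU)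
    (VarU : Matrix (Fin n) (Fin n) ℝ)
    (hVarU : ∀ i j, VarU i j =
      (∫ ω, U i ω * U j ω ∂P) - (∫ ω, U i ω ∂P) * (∫ ω, U j ω ∂P))
    (M : Matrix (Fin n) (Fin d) ℝ) (hM : M = VarU⁻¹ * covXUᵀ)
    -- (α_F, δ, β_F): the least-squares projection of Y_S onto {1, U(S), X_S}
    (αF : ℝ) (δ : Fin n → ℝ) (βF : Fin d → ℝ)
    (hproj : ∀ (a : ℝ) (l : Fin n → ℝ) (b : Fin d → ℝ),
      ∫ ω, (αF + (∑ k, δ k * U k ω) + βF ⬝ᵥ X ω - Y ω) ^ 2 ∂P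
        ≤ ∫ ω, (a + (∑ k, l k * U k ω) + b ⬝ᵥ X ω - Y ω) ^ 2 ∂P)
    (γ : Fin d → ℝ)
    -- Ŷ_γ reduces the mean squared error relative to Ŷ_0
    (hless :
      ∫ ω, ((∫ ω', Y ω' ∂P) + (βF + γ) ⬝ᵥ (X ω - μbar) - Y ω) ^ 2 ∂P
        < ∫ ω, ((∫ ω', Y ω' ∂P) + βF ⬝ᵥ (X ω - μbar) - Y ω) ^ 2 ∂P) :
    -- (i) cov[γᵀX_S, δᵀΛᵀX_S] > 0
    (0 < (∫ ω, (γ ⬝ᵥ X ω) * ((Λ *ᵥ δ) ⬝ᵥ X ω) ∂P)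
        - (∫ ω, γ ⬝ᵥ X ω ∂P) * (∫ ω, (Λ *ᵥ δ) ⬝ᵥ X ω ∂P)) ∧
    -- (ii) cov[γᵀMᵀU(S), δᵀU(S)] > 0
    (0 < (∫ ω, ((M *ᵥ γ) ⬝ᵥ fun k => U k ω) * (δ ⬝ᵥ fun k => U k ω) ∂P)
        - (∫ ω, ((M *ᵥ γ) ⬝ᵥ fun k => U k ω) ∂P) * (∫ ω, (δ ⬝ᵥ fun k => U k ω) ∂P)) := by
  obtain ⟨hX2, hU2, hY2⟩ := memLp_two_of_forall_integrable_residual_sq hint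
  obtain rfl := eq_crossCovariance hX2 hX2 hVarX
  obtain rfl := eq_crossCovariance hX2 hU2 hcovXU
  obtain rfl := eq_crossCovariance hU2 hU2 hVarU
  have hmeas' : ∀ s, P.real {ω | S ω = s} = p s := fun s => by
    rw [measureReal_def, hmeas, ENNReal.toReal_ofReal (hp s).le]
  have hEX : ∀ i, ∫ ω, X ω i ∂P = μbar i := fun i => by
    rw [integral_eq_sum_setIntegral_fiber hS ((hX2 i).integrable one_le_two), hμbar]
    simp [hmean]
  have key : 0 < γ ⬝ᵥ (crossCovariance X (fun ω k => U k ω) P *ᵥ δ) := by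
    have h := covariance_pos_of_integral_sq_lt hX2 hY2 (memLp_dotProduct hU2 δ) hEX
      (fun a b => hproj a δ b) hless
    rwa [covariance_comm, covariance_dotProduct hX2 hU2] at h
  have hVarX_det := isUnit_det_crossCovariance_self hX2 fun x hx =>
    variance_dotProduct_pos_of_mixture hS hX2 hp hmeas' hmean hcovX hSigPD hx
  have hVarU_det := isUnit_det_crossCovariance_self hU2 fun x hx => by
    simp only [hU]
    exact variance_dotProduct_indicator_pos hS hp hmeas' (Fin.castSucc_injective n)
      Fin.castSucc_ne_last _ hx
  refine ⟨?_, ?_⟩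
  · rwa [← covariance_eq_integral_mul_sub (memLp_dotProduct hX2 γ) (memLp_dotProduct hX2 _),
      covariance_dotProduct hX2 hX2, hΛ, mulVec_mulVec,
      mul_nonsing_inv_cancel_left _ _ hVarX_det]
  · rwa [← covariance_eq_integral_mul_sub (memLp_dotProduct hU2 _) (memLp_dotProduct hU2 δ),
      covariance_comm, covariance_dotProduct hU2 hU2, hM, mulVec_mulVec,
      mul_nonsing_inv_cancel_left _ _ hVarU_det, dotProduct_mulVec, vecMul_transpose,
      dotProduct_comm]

/-- Let `Ŷ_γ(x) = E[Y_S] + (β_F + γ)ᵀ(x − μ̄)`. If `γ` strictly reduces the mean squared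
error relative to `γ = 0`, then it misdirects legitimate information:
(i) `cov[γᵀX_S, δᵀΛᵀX_S] > 0` and (ii) `cov[γᵀMᵀU(S), δᵀU(S)] > 0`. -/
theorem stmt14
    {Ω : Type*} [MeasurableSpace Ω] (P : Measure Ω) [IsProbabilityMeasure P]
    (n d : ℕ) (S : Ω → Fin (n + 1)) (hS : Measurable S)
    (X : Ω → Fin d → ℝ) (Y : Ω → ℝ) (ε : Ω → ℝ)
    (p : Fin (n + 1) → ℝ) (μv : Fin (n + 1) → Fin d → ℝ)
    (Sig : Fin (n + 1) → Matrix (Fin d) (Fin d) ℝ)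
    (αb : Fin (n + 1) → ℝ) (βb : Fin (n + 1) → Fin d → ℝ)
    (hp : ∀ s, 0 < p s)
    (hmeas : ∀ s, P {ω | S ω = s} = ENNReal.ofReal (p s))
    (hmean : ∀ s i, ∫ ω in {ω | S ω = s}, X ω i ∂P = p s * μv s i)
    (hcovX : ∀ s i j,
      ∫ ω in {ω | S ω = s}, (X ω i - μv s i) * (X ω j - μv s j) ∂P = p s * Sig s i j)
    (hSigPD : ∀ s, (Sig s).PosDef)
    (hY : ∀ ω, Y ω = αb (S ω) + βb (S ω) ⬝ᵥ X ω + ε ω)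
    (hε : ∀ s, ∫ ω in {ω | S ω = s}, ε ω ∂P = 0)
    (hXε : ∀ s i, ∫ ω in {ω | S ω = s}, (X ω i - μv s i) * ε ω ∂P = 0)
    (μbar : Fin d → ℝ) (hμbar : μbar = ∑ s, p s • μv s)
    -- centered bank dummies
    (U : Fin n → Ω → ℝ)
    (hU : ∀ i ω, U i ω = (if S ω = i.castSucc then 1 else 0) - p i.castSucc)
    (hint : ∀ (a : ℝ) (l : Fin n → ℝ) (b : Fin d → ℝ),
      Integrable (fun ω => (a + (∑ k, l k * U k ω) + b ⬝ᵥ X ω - Y ω) ^ 2) P)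
    -- Λ = var[X_S]⁻¹ cov[X_S, U(S)] and M = var[U(S)]⁻¹ cov[U(S), X_S]
    (VarX : Matrix (Fin d) (Fin d) ℝ)
    (hVarX : ∀ i j, VarX i j =
      (∫ ω, X ω i * X ω j ∂P) - (∫ ω, X ω i ∂P) * (∫ ω, X ω j ∂P))
    (covXU : Matrix (Fin d) (Fin n) ℝ)
    (hcovXU : ∀ i k, covXU i k =
      (∫ ω, X ω i * U k ω ∂P) - (∫ ω, X ω i ∂P) * (∫ ω, U k ω ∂P))
    (Λ : Matrix (Fin d) (Fin n) ℝ) (hΛ : Λ = VarX⁻¹ * covXU)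
    (VarU : Matrix (Fin n) (Fin n) ℝ)
    (hVarU : ∀ i j, VarU i j =
      (∫ ω, U i ω * U j ω ∂P) - (∫ ω, U i ω ∂P) * (∫ ω, U j ω ∂P))
    (M : Matrix (Fin n) (Fin d) ℝ) (hM : M = VarU⁻¹ * covXUᵀ)
    -- (α_F, δ, β_F): the least-squares projection of Y_S onto {1, U(S), X_S}
    (αF : ℝ) (δ : Fin n → ℝ) (βF : Fin d → ℝ)
    (hproj : ∀ (a : ℝ) (l : Fin n → ℝ) (b : Fin d → ℝ),
      ∫ ω, (αF + (∑ k, δ k * U k ω) + βF ⬝ᵥ X ω - Y ω) ^ 2 ∂P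
        ≤ ∫ ω, (a + (∑ k, l k * U k ω) + b ⬝ᵥ X ω - Y ω) ^ 2 ∂P)
    (γ : Fin d → ℝ)
    -- Ŷ_γ reduces the mean squared error relative to Ŷ_0
    (hless :
      ∫ ω, ((∫ ω', Y ω' ∂P) + (βF + γ) ⬝ᵥ (X ω - μbar) - Y ω) ^ 2 ∂P
        < ∫ ω, ((∫ ω', Y ω' ∂P) + βF ⬝ᵥ (X ω - μbar) - Y ω) ^ 2 ∂P) :
    -- (i) cov[γᵀX_S, δᵀΛᵀX_S] > 0
    (0 < (∫ ω, (γ ⬝ᵥ X ω) * ((Λ *ᵥ δ) ⬝ᵥ X ω) ∂P)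
        - (∫ ω, γ ⬝ᵥ X ω ∂P) * (∫ ω, (Λ *ᵥ δ) ⬝ᵥ X ω ∂P)) ∧
    -- (ii) cov[γᵀMᵀU(S), δᵀU(S)] > 0
    (0 < (∫ ω, ((M *ᵥ γ) ⬝ᵥ fun k => U k ω) * (δ ⬝ᵥ fun k => U k ω) ∂P)
        - (∫ ω, ((M *ᵥ γ) ⬝ᵥ fun k => U k ω) ∂P) * (∫ ω, (δ ⬝ᵥ fun k => U k ω) ∂P)) :=
  stmt14_general P n d S hS X Y p μv Sig hp hmeas hmean hcovX hSigPD μbar hμbar U hU hint VarX hVarX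
    covXU hcovXU Λ hΛ VarU hVarU M hM αF δ βF hproj γ hless
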